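/- Let φ(t) = (2π)^{-1/2} e^{-t²/2} denote the standard normal density and Φ(t) = ∫_{-∞}^{t} φ(u) du the standard normal CDF. For μ ∈ ℝ, σ > 0 and x ∈ ℝ, set z = (x − μ)/σ. Then the continuous ranked probability score of the Gaussian predictive distribution N(μ, σ²) at the observation x has the closed form ∫_ℝ (Φ((y − μ)/σ) − 1{y ≥ x})² dy = σ ( z (2Φ(z) − 1) + 2φ(z) − 1/√π ). -/

import Mathlib

open MeasureTheory Real

/-- Standard normal density `φ(t) = (2π)^{-1/2} e^{-t²/2}`. -/
noncomputable def stdNormalPDF (t : ℝ) : ℝ :=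
  (Real.sqrt (2 * Real.pi))⁻¹ * Real.exp (-t ^ 2 / 2)

/-- Standard normal CDF `Φ(t) = ∫_{-∞}^t φ(u) du`. -/
noncomputable def stdNormalCDF (t : ℝ) : ℝ :=
  ∫ u in Set.Iic t, stdNormalPDF u

/-! After the substitution `t = (y - μ) / σ` the integral is `σ` times the case
`μ = 0`, `σ = 1`, which splits at `z` into `∫_{t < z} Φ²` and
`∫_{t ≥ z} (1 - Φ)² = ∫_{t ≤ -z} Φ²`, by the symmetry `Φ (-t) = 1 - Φ t`.
Since `φ' t = -t φ t` and `2 φ(t)² = √2 φ(√2 t) / √π`, the function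
`A t = t Φ(t)² + 2 φ(t) Φ(t) - Φ(√2 t) / √π` is a primitive of `Φ²`. It vanishes at `-∞`
because `φ t + t Φ t = ∫_{u ≤ t} (t - u) φ u du ≥ 0`, a bound which also makes `Φ²`
integrable there. Hence the integral is `A z + A (-z)`, which is the closed form. -/

open Set Filter Topology ProbabilityTheory

lemma stdNormalPDF_eq_gaussianPDFReal : stdNormalPDF = gaussianPDFReal 0 1 := by
  ext t
  simp [stdNormalPDF, gaussianPDFReal]

lemma stdNormalPDF_nonneg (t : ℝ) : 0 ≤ stdNormalPDF t := by
  unfold stdNormalPDF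
  positivity

lemma stdNormalPDF_neg (t : ℝ) : stdNormalPDF (-t) = stdNormalPDF t := by
  simp [stdNormalPDF]

lemma continuous_stdNormalPDF : Continuous stdNormalPDF := by
  unfold stdNormalPDF
  fun_prop

lemma integrable_stdNormalPDF : Integrable stdNormalPDF := by
  rw [stdNormalPDF_eq_gaussianPDFReal]
  exact integrable_gaussianPDFReal 0 1

lemma integral_stdNormalPDF : ∫ t, stdNormalPDF t = 1 := by
  rw [stdNormalPDF_eq_gaussianPDFReal]
  exact integral_gaussianPDFReal_eq_one 0 one_ne_zero

lemma hasDerivAt_stdNormalPDF (t : ℝ) : HasDerivAt stdNormalPDF (-t * stdNormalPDF t) t := by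
  have h : HasDerivAt (fun u : ℝ => -u ^ 2 / 2) (-t) t := by
    refine ((hasDerivAt_pow 2 t).fun_neg.div_const 2).congr_deriv ?_
    push_cast
    ring
  exact (h.exp.const_mul (√(2 * π))⁻¹).congr_deriv (by simp only [stdNormalPDF]; ring)

lemma tendsto_stdNormalPDF_atBot : Tendsto stdNormalPDF atBot (𝓝 0) := by
  have hsq : Tendsto (fun t : ℝ => t ^ 2 / 2) atBot atTop := by
    simpa using ((tendsto_pow_atTop two_ne_zero).comp tendsto_neg_atBot_atTop).atTop_div_const
      (two_pos : (0 : ℝ) < 2)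
  have h := (tendsto_exp_atBot.comp (tendsto_neg_atTop_atBot.comp hsq)).const_mul (√(2 * π))⁻¹
  unfold stdNormalPDF
  simpa only [Function.comp_def, mul_zero, neg_div] using h

lemma integrable_mul_stdNormalPDF : Integrable fun u : ℝ => u * stdNormalPDF u := by
  refine ((integrable_mul_exp_neg_mul_sq one_half_pos).const_mul (√(2 * π))⁻¹).congr
    (.of_forall fun u => ?_)
  simp only [stdNormalPDF]
  ring_nf

lemma setIntegral_Iic_mul_stdNormalPDF (t : ℝ) :
    ∫ u in Iic t, u * stdNormalPDF u = -stdNormalPDF t := by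
  have hderiv (u : ℝ) : HasDerivAt (fun v => -stdNormalPDF v) (u * stdNormalPDF u) u := by
    simpa using (hasDerivAt_stdNormalPDF u).fun_neg
  rw [integral_Iic_of_hasDerivAt_of_tendsto (f := fun v => -stdNormalPDF v)
    continuous_stdNormalPDF.neg.continuousWithinAt
    (fun u _ => hderiv u) integrable_mul_stdNormalPDF.integrableOn
    (by simpa using tendsto_stdNormalPDF_atBot.neg), sub_zero]

lemma two_mul_stdNormalPDF_sq (t : ℝ) :
    2 * stdNormalPDF t ^ 2 = √2 * stdNormalPDF (√2 * t) / √π := by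
  have hexp : rexp (-t ^ 2 / 2) ^ 2 = rexp (-(√2 * t) ^ 2 / 2) := by
    rw [← exp_nat_mul, mul_pow, sq_sqrt zero_le_two]
    ring_nf
  simp only [stdNormalPDF, mul_pow, hexp, sqrt_mul zero_le_two, inv_pow, sq_sqrt zero_le_two]
  field_simp

lemma stdNormalCDF_nonneg (t : ℝ) : 0 ≤ stdNormalCDF t :=
  setIntegral_nonneg measurableSet_Iic fun u _ => stdNormalPDF_nonneg u

lemma stdNormalCDF_neg (t : ℝ) : stdNormalCDF (-t) = 1 - stdNormalCDF t := by
  have htail : stdNormalCDF (-t) = ∫ u in Ioi t, stdNormalPDF u := by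
    simp only [stdNormalCDF, ← integral_comp_neg_Ioi, stdNormalPDF_neg]
  rw [htail, ← integral_stdNormalPDF, ← intervalIntegral.integral_Iic_add_Ioi
    integrable_stdNormalPDF.integrableOn integrable_stdNormalPDF.integrableOn, stdNormalCDF]
  ring

lemma stdNormalCDF_le_one (t : ℝ) : stdNormalCDF t ≤ 1 := by
  linarith [stdNormalCDF_neg t, stdNormalCDF_nonneg (-t)]

lemma hasDerivAt_stdNormalCDF (t : ℝ) : HasDerivAt stdNormalCDF (stdNormalPDF t) t := by
  have hFTC : stdNormalCDF = fun s => stdNormalCDF 0 + ∫ u in (0 : ℝ)..s, stdNormalPDF u := by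
    ext s
    rw [stdNormalCDF, stdNormalCDF, ← intervalIntegral.integral_Iic_sub_Iic
      integrable_stdNormalPDF.integrableOn integrable_stdNormalPDF.integrableOn]
    ring
  rw [hFTC]
  exact (continuous_stdNormalPDF.integral_hasStrictDerivAt 0 t).hasDerivAt.const_add _

lemma continuous_stdNormalCDF : Continuous stdNormalCDF :=
  continuous_iff_continuousAt.2 fun t => (hasDerivAt_stdNormalCDF t).continuousAt

lemma neg_mul_stdNormalCDF_le_stdNormalPDF (t : ℝ) :
    -(t * stdNormalCDF t) ≤ stdNormalPDF t := by
  have h : ∫ u in Iic t, u * stdNormalPDF u ≤ ∫ u in Iic t, t * stdNormalPDF u :=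
    setIntegral_mono_on integrable_mul_stdNormalPDF.integrableOn
      (integrable_stdNormalPDF.integrableOn.const_mul t) measurableSet_Iic
      fun u hu => mul_le_mul_of_nonneg_right hu (stdNormalPDF_nonneg u)
  rw [setIntegral_Iic_mul_stdNormalPDF, integral_const_mul] at h
  rw [stdNormalCDF]
  linarith

lemma stdNormalCDF_le_stdNormalPDF {t : ℝ} (ht : t ≤ -1) : stdNormalCDF t ≤ stdNormalPDF t := by
  nlinarith [neg_mul_stdNormalCDF_le_stdNormalPDF t, stdNormalCDF_nonneg t]

lemma tendsto_stdNormalCDF_atBot : Tendsto stdNormalCDF atBot (𝓝 0) :=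
  tendsto_of_tendsto_of_tendsto_of_le_of_le' tendsto_const_nhds tendsto_stdNormalPDF_atBot
    (.of_forall stdNormalCDF_nonneg)
    ((eventually_le_atBot (-1)).mono fun _ => stdNormalCDF_le_stdNormalPDF)

lemma integrableOn_Iic_stdNormalCDF (b : ℝ) : IntegrableOn stdNormalCDF (Iic b) := by
  have hleft : IntegrableOn stdNormalCDF (Iic (-1)) := by
    refine integrable_stdNormalPDF.integrableOn.mono'
      continuous_stdNormalCDF.aestronglyMeasurable
      ((ae_restrict_iff' measurableSet_Iic).2 (.of_forall fun t ht => ?_))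
    rw [norm_of_nonneg (stdNormalCDF_nonneg t)]
    exact stdNormalCDF_le_stdNormalPDF ht
  have hright : IntegrableOn stdNormalCDF (Icc (-1) b) :=
    continuous_stdNormalCDF.continuousOn.integrableOn_Icc
  refine (hleft.union hright).mono_set fun t ht => ?_
  rcases le_or_gt t (-1) with h | h
  exacts [Or.inl h, Or.inr ⟨h.le, ht⟩]

noncomputable def stdNormalCDFSqPrimitive (t : ℝ) : ℝ :=
  t * stdNormalCDF t ^ 2 + 2 * stdNormalPDF t * stdNormalCDF t - stdNormalCDF (√2 * t) / √π

lemma hasDerivAt_stdNormalCDFSqPrimitive (t : ℝ) :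
    HasDerivAt stdNormalCDFSqPrimitive (stdNormalCDF t ^ 2) t := by
  have hΦ := hasDerivAt_stdNormalCDF t
  have hΦ₂ := (hasDerivAt_stdNormalCDF (√2 * t)).comp t ((hasDerivAt_id t).const_mul √2)
  have h := (((hasDerivAt_id t).mul (hΦ.pow 2)).add
    (((hasDerivAt_stdNormalPDF t).const_mul 2).mul hΦ)).sub (hΦ₂.div_const √π)
  refine h.congr_deriv ?_
  simp only [id, Pi.pow_apply, Nat.cast_ofNat]
  linear_combination two_mul_stdNormalPDF_sq t

lemma tendsto_mul_sq_stdNormalCDF_atBot :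
    Tendsto (fun t => t * stdNormalCDF t ^ 2) atBot (𝓝 0) := by
  refine squeeze_zero_norm' ((eventually_le_atBot 0).mono fun t ht => ?_)
    tendsto_stdNormalPDF_atBot
  rw [norm_mul, norm_of_nonpos ht, norm_of_nonneg (by positivity), sq, ← mul_assoc]
  nlinarith [neg_mul_stdNormalCDF_le_stdNormalPDF t, stdNormalCDF_nonneg t,
    stdNormalCDF_le_one t, stdNormalPDF_nonneg t]

lemma tendsto_stdNormalCDFSqPrimitive_atBot :
    Tendsto stdNormalCDFSqPrimitive atBot (𝓝 0) := by
  have hΦ₂ : Tendsto (fun t => stdNormalCDF (√2 * t)) atBot (𝓝 0) :=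
    tendsto_stdNormalCDF_atBot.comp (tendsto_id.const_mul_atBot (by positivity))
  unfold stdNormalCDFSqPrimitive
  simpa using (tendsto_mul_sq_stdNormalCDF_atBot.add
    ((tendsto_stdNormalPDF_atBot.const_mul 2).mul tendsto_stdNormalCDF_atBot)).sub
    (hΦ₂.div_const √π)

lemma integrableOn_Iic_sq_stdNormalCDF (b : ℝ) :
    IntegrableOn (fun t => stdNormalCDF t ^ 2) (Iic b) := by
  refine (integrableOn_Iic_stdNormalCDF b).mono'
    (continuous_stdNormalCDF.pow 2).aestronglyMeasurable (.of_forall fun t => ?_)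
  rw [norm_pow, norm_of_nonneg (stdNormalCDF_nonneg t), sq]
  exact mul_le_of_le_one_left (stdNormalCDF_nonneg t) (stdNormalCDF_le_one t)

lemma setIntegral_Iic_sq_stdNormalCDF (b : ℝ) :
    ∫ t in Iic b, stdNormalCDF t ^ 2 = stdNormalCDFSqPrimitive b := by
  rw [integral_Iic_of_hasDerivAt_of_tendsto
    (hasDerivAt_stdNormalCDFSqPrimitive b).continuousAt.continuousWithinAt
    (fun t _ => hasDerivAt_stdNormalCDFSqPrimitive t) (integrableOn_Iic_sq_stdNormalCDF b)
    tendsto_stdNormalCDFSqPrimitive_atBot, sub_zero]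

lemma sq_stdNormalCDF_sub_one (t : ℝ) : (stdNormalCDF t - 1) ^ 2 = stdNormalCDF (-t) ^ 2 := by
  rw [stdNormalCDF_neg]
  ring

lemma integrableOn_Ici_sq_stdNormalCDF_sub_one (z : ℝ) :
    IntegrableOn (fun t => (stdNormalCDF t - 1) ^ 2) (Ici z) := by
  have h := ((Measure.measurePreserving_neg volume).integrableOn_comp_preimage
    (Homeomorph.neg ℝ).measurableEmbedding).2 (integrableOn_Iic_sq_stdNormalCDF (-z))
  simpa [Function.comp_def, sq_stdNormalCDF_sub_one] using h

lemma setIntegral_Ici_sq_stdNormalCDF_sub_one (z : ℝ) :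
    ∫ t in Ici z, (stdNormalCDF t - 1) ^ 2 = stdNormalCDFSqPrimitive (-z) := by
  simp only [integral_Ici_eq_integral_Ioi, sq_stdNormalCDF_sub_one,
    integral_comp_neg_Ioi z fun t => stdNormalCDF t ^ 2, setIntegral_Iic_sq_stdNormalCDF]

lemma integral_sq_stdNormalCDF_sub_ite (z : ℝ) :
    ∫ t, (stdNormalCDF t - if z ≤ t then 1 else 0) ^ 2
      = z * (2 * stdNormalCDF z - 1) + 2 * stdNormalPDF z - 1 / √π := by
  have hleft : EqOn (fun t => (stdNormalCDF t - if z ≤ t then 1 else 0) ^ 2)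
      (fun t => stdNormalCDF t ^ 2) (Iio z) := fun t ht => by
    simp [not_le.2 (mem_Iio.1 ht)]
  have hright : EqOn (fun t => (stdNormalCDF t - if z ≤ t then 1 else 0) ^ 2)
      (fun t => (stdNormalCDF t - 1) ^ 2) (Ici z) := fun t ht => by
    simp [mem_Ici.1 ht]
  rw [← intervalIntegral.integral_Iio_add_Ici
      (((integrableOn_Iic_sq_stdNormalCDF z).mono_set Iio_subset_Iic_self).congr_fun
        hleft.symm measurableSet_Iio)
      ((integrableOn_Ici_sq_stdNormalCDF_sub_one z).congr_fun hright.symm measurableSet_Ici),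
    setIntegral_congr_fun measurableSet_Iio hleft, setIntegral_congr_fun measurableSet_Ici hright,
    ← integral_Iic_eq_integral_Iio, setIntegral_Iic_sq_stdNormalCDF,
    setIntegral_Ici_sq_stdNormalCDF_sub_one]
  simp only [stdNormalCDFSqPrimitive, stdNormalPDF_neg, mul_neg, stdNormalCDF_neg]
  ring

/-- Closed form of the continuous ranked probability score of the Gaussian predictive
distribution `N(μ, σ²)` at the observation `x`: with `z = (x − μ)/σ`,
`∫ (Φ((y − μ)/σ) − 1{y ≥ x})² dy = σ (z (2Φ(z) − 1) + 2φ(z) − 1/√π)`. -/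
theorem crps_gaussian_closed_form (μ σ x : ℝ) (hσ : 0 < σ) :
    ∫ y : ℝ, (stdNormalCDF ((y - μ) / σ) - (if x ≤ y then (1 : ℝ) else 0)) ^ 2
      = σ * (((x - μ) / σ) * (2 * stdNormalCDF ((x - μ) / σ) - 1)
            + 2 * stdNormalPDF ((x - μ) / σ) - 1 / Real.sqrt Real.pi) := by
  set z := (x - μ) / σ
  set g : ℝ → ℝ := fun t => (stdNormalCDF t - if z ≤ t then 1 else 0) ^ 2
  have hobs (y : ℝ) : x ≤ y ↔ z ≤ (y - μ) / σ := by
    rw [div_le_div_iff_of_pos_right hσ, sub_le_sub_iff_right]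
  calc ∫ y, (stdNormalCDF ((y - μ) / σ) - (if x ≤ y then (1 : ℝ) else 0)) ^ 2
      = ∫ y, g ((y - μ) / σ) := by simp only [g, hobs]
    _ = ∫ y, g (y / σ) := integral_sub_right_eq_self (fun y => g (y / σ)) μ
    _ = σ * ∫ t, g t := by rw [Measure.integral_comp_div, abs_of_pos hσ, smul_eq_mul]
    _ = _ := by rw [integral_sq_stdNormalCDF_sub_ite]
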